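/- arXiv:math/0508091 — 2 statements merged into one kernel-verified Lean document; each statement's English description precedes it below -/
import Mathlib

section
/- Let B be a locally C*-algebra, E a Hilbert B-module, (φ, H) a non-degenerate representation of B, and q a continuous C*-seminorm on B with associated factorization φ = φ_q ∘ π_q. Then the map ξ ⊗ h ↦ σ_q(ξ) ⊗ h extends to a unitary U : _EH → _{E_q}H satisfying U ∘ _Eφ(T) = (_{E_q}φ_q)((π_q)_*(T)) ∘ U for every adjointable T ∈ L_B(E); hence the representations (_Eφ, _EH) of L_B(E) and (_{E_q}φ_q ∘ (π_q)_*, _{E_q}H) are unitarily equivalent. -/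
noncomputable section

open Filter Topology Set
open scoped InnerProductSpace

universe u v w

/-- A continuous C*-seminorm on a topological `*`-algebra over `ℂ`. -/
structure CStarSeminorm (A : Type*) [Ring A] [StarRing A] [Algebra ℂ A]
    [TopologicalSpace A] where
  toFun : A → ℝ
  nonneg' : ∀ a, 0 ≤ toFun a
  add_le' : ∀ a b, toFun (a + b) ≤ toFun a + toFun b
  smul' : ∀ (c : ℂ) (a : A), toFun (c • a) = ‖c‖ * toFun a
  mul_le' : ∀ a b, toFun (a * b) ≤ toFun a * toFun b
  star_mul_self' : ∀ a, toFun (star a * a) = toFun a ^ 2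
  continuous' : Continuous toFun

instance {A : Type*} [Ring A] [StarRing A] [Algebra ℂ A] [TopologicalSpace A] :
    FunLike (CStarSeminorm A) A ℝ where
  coe := CStarSeminorm.toFun
  coe_injective := by rintro ⟨⟩ ⟨⟩ h; congr

/-- `A` is a locally C*-algebra: it is a (complete, Hausdorff, topological) `*`-algebra
whose topology is determined by its continuous C*-seminorms: a filter tends to `0`
iff its image under every continuous C*-seminorm tends to `0`. -/
def IsLocallyCStarAlgebra (A : Type*) [Ring A] [StarRing A] [Algebra ℂ A]
    [TopologicalSpace A] : Prop :=
  ∀ l : Filter A, Tendsto id l (nhds 0) ↔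
    ∀ p : CStarSeminorm A, Tendsto (fun a => p a) l (nhds (0 : ℝ))

/-- A Hilbert module over a locally C*-algebra `A`: a right `A`-module with an
`A`-valued inner product, complete for the topology determined by the seminorms
`ξ ↦ √(p ⟨ξ,ξ⟩)`, `p` a continuous C*-seminorm on `A`. -/
structure HilbertModule (A : Type u) [Ring A] [StarRing A] [Algebra ℂ A] [UniformSpace A]
    (E : Type v) [AddCommGroup E] [Module ℂ E] [UniformSpace E] where
  smul : E → A → E
  smul_add : ∀ ξ a b, smul ξ (a + b) = smul ξ a + smul ξ b
  add_smul : ∀ ξ η a, smul (ξ + η) a = smul ξ a + smul η a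
  smul_smul : ∀ ξ a b, smul (smul ξ a) b = smul ξ (a * b)
  smul_commC : ∀ (c : ℂ) ξ a, smul (c • ξ) a = c • smul ξ a
  smul_algebra : ∀ (c : ℂ) ξ a, smul ξ (c • a) = c • smul ξ a
  inner : E → E → A
  inner_add_right : ∀ ξ η ζ, inner ξ (η + ζ) = inner ξ η + inner ξ ζ
  inner_smulC : ∀ (c : ℂ) ξ η, inner ξ (c • η) = c • inner ξ η
  inner_smul_right : ∀ ξ η a, inner ξ (smul η a) = inner ξ η * a
  star_inner : ∀ ξ η, star (inner ξ η) = inner η ξ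
  inner_self_pos : ∀ ξ, ∃ a, inner ξ ξ = star a * a
  inner_self_eq_zero : ∀ ξ, inner ξ ξ = 0 → ξ = 0
  topology_eq : ∀ l : Filter E, Tendsto id l (nhds 0) ↔
      ∀ p : CStarSeminorm A, Tendsto (fun ξ => Real.sqrt (p (inner ξ ξ))) l (nhds (0 : ℝ))
  complete : CompleteSpace E

/-- A Hilbert C*-module over a C*-algebra `B` (normed version). -/
structure HilbertCStarModule (B : Type u) [NormedRing B] [StarRing B] [CStarRing B]
    [NormedAlgebra ℂ B] [StarModule ℂ B] [CompleteSpace B]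
    (E : Type v) [NormedAddCommGroup E] [NormedSpace ℂ E] where
  smul : E → B → E
  smul_add : ∀ ξ a b, smul ξ (a + b) = smul ξ a + smul ξ b
  add_smul : ∀ ξ η a, smul (ξ + η) a = smul ξ a + smul η a
  smul_smul : ∀ ξ a b, smul (smul ξ a) b = smul ξ (a * b)
  smul_commC : ∀ (c : ℂ) ξ a, smul (c • ξ) a = c • smul ξ a
  smul_algebra : ∀ (c : ℂ) ξ a, smul ξ (c • a) = c • smul ξ a
  inner : E → E → B
  inner_add_right : ∀ ξ η ζ, inner ξ (η + ζ) = inner ξ η + inner ξ ζ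
  inner_smulC : ∀ (c : ℂ) ξ η, inner ξ (c • η) = c • inner ξ η
  inner_smul_right : ∀ ξ η a, inner ξ (smul η a) = inner ξ η * a
  star_inner : ∀ ξ η, star (inner ξ η) = inner η ξ
  inner_self_pos : ∀ ξ, ∃ a, inner ξ ξ = star a * a
  inner_self_eq_zero : ∀ ξ, inner ξ ξ = 0 → ξ = 0
  norm_eq : ∀ ξ, ‖ξ‖ = Real.sqrt ‖inner ξ ξ‖
  complete : CompleteSpace E

/-- A representation of a topological `*`-algebra `A` on a Hilbert space `H`:
a continuous `*`-homomorphism into the bounded operators. -/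
structure RepOn (A : Type u) [Ring A] [StarRing A] [Algebra ℂ A] [TopologicalSpace A]
    (H : Type v) [NormedAddCommGroup H] [InnerProductSpace ℂ H] [CompleteSpace H] where
  toFun : A → H →L[ℂ] H
  map_add : ∀ a b, toFun (a + b) = toFun a + toFun b
  map_mul : ∀ a b, toFun (a * b) = (toFun a).comp (toFun b)
  map_smulC : ∀ (c : ℂ) a, toFun (c • a) = c • toFun a
  map_star : ∀ a, toFun (star a) = ContinuousLinearMap.adjoint (toFun a)
  continuous : Continuous toFun

/-- A representation is non-degenerate if `φ(A)H` spans a dense subspace. -/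
def RepOn.Nondegenerate {A : Type u} [Ring A] [StarRing A] [Algebra ℂ A] [TopologicalSpace A]
    {H : Type v} [NormedAddCommGroup H] [InnerProductSpace ℂ H] [CompleteSpace H]
    (φ : RepOn A H) : Prop :=
  Dense (↑(Submodule.span ℂ {h : H | ∃ a x, h = φ.toFun a x}) : Set H)

/-- Unitary equivalence of two representations. -/
def UnitarilyEquiv {A : Type u} [Ring A] [StarRing A] [Algebra ℂ A] [TopologicalSpace A]
    {H₁ : Type v} [NormedAddCommGroup H₁] [InnerProductSpace ℂ H₁] [CompleteSpace H₁]
    {H₂ : Type w} [NormedAddCommGroup H₂] [InnerProductSpace ℂ H₂] [CompleteSpace H₂]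
    (φ₁ : RepOn A H₁) (φ₂ : RepOn A H₂) : Prop :=
  ∃ U : H₁ ≃ₗᵢ[ℂ] H₂, ∀ a h, U (φ₁.toFun a h) = φ₂.toFun a (U h)

/-- The data of the induced Hilbert space `E ⊗_φ H`: a Hilbert space `K` together with
a map `ι : E × H → K` whose image spans a dense subspace and such that
`⟪ι ξ h₁, ι η h₂⟫ = ⟪h₁, φ(⟨ξ,η⟩) h₂⟫`. -/
structure InducedSpace {B : Type u} {E : Type v}
    {H : Type w} [NormedAddCommGroup H] [InnerProductSpace ℂ H] [CompleteSpace H]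
    (innerE : E → E → B) (φ : B → H →L[ℂ] H)
    (K : Type*) [NormedAddCommGroup K] [InnerProductSpace ℂ K] [CompleteSpace K] where
  ι : E → H → K
  inner_eq : ∀ ξ η h₁ h₂, ⟪ι ξ h₁, ι η h₂⟫_ℂ = ⟪h₁, φ (innerE ξ η) h₂⟫_ℂ
  dense : Dense (↑(Submodule.span ℂ {k : K | ∃ ξ h, k = ι ξ h}) : Set K)

/-- `S` is the adjoint of `T` relative to the `B`-valued inner product `innerE`. -/
def Adjointable {B : Type u} {E : Type v} (innerE : E → E → B) (T S : E → E) : Prop :=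
  ∀ ξ η, innerE (T ξ) η = innerE ξ (S η)

/-- `p̃(T) ≤ C` for the operator seminorm `p̃` associated to a C*-seminorm `p`. -/
def OpSeminormLE {A : Type u} {E : Type v} (innerE : E → E → A) (p : A → ℝ)
    (T : E → E) (C : ℝ) : Prop :=
  ∀ ξ, p (innerE (T ξ) (T ξ)) ≤ C ^ 2 * p (innerE ξ ξ)

/-- A non-degenerate continuous action of a locally C*-algebra `A` on a Hilbert
module `E` over a locally C*-algebra `B`, i.e. a non-degenerate continuous
`*`-morphism `A → L_B(E)`. -/
structure ModuleAction (A : Type u) [Ring A] [StarRing A] [Algebra ℂ A] [UniformSpace A]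
    {B : Type v} [Ring B] [StarRing B] [Algebra ℂ B] [UniformSpace B]
    {E : Type w} [AddCommGroup E] [Module ℂ E] [UniformSpace E]
    (M : HilbertModule B E) where
  Φ : A → E → E
  map_add : ∀ a b ξ, Φ (a + b) ξ = Φ a ξ + Φ b ξ
  map_addE : ∀ a ξ η, Φ a (ξ + η) = Φ a ξ + Φ a η
  map_mul : ∀ a b ξ, Φ (a * b) ξ = Φ a (Φ b ξ)
  map_smulC : ∀ (c : ℂ) a ξ, Φ (c • a) ξ = c • Φ a ξ
  map_smulE : ∀ (c : ℂ) a ξ, Φ a (c • ξ) = c • Φ a ξ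
  map_smulB : ∀ a ξ b, Φ a (M.smul ξ b) = M.smul (Φ a ξ) b
  adjoint : ∀ a, Adjointable M.inner (Φ a) (Φ (star a))
  continuous : ∀ q : CStarSeminorm B, ∃ p : CStarSeminorm A,
      ∀ a, OpSeminormLE M.inner (fun x => q x) (Φ a) (p a)
  nondeg : Dense (↑(Submodule.span ℂ {ξ : E | ∃ a η, ξ = Φ a η}) : Set E)

/-- `ψ` is the representation induced (via the induced space data `ind`) from the
action `Φ` of `A` on the module. -/
def IsInducedRep {A : Type u} [Ring A] [StarRing A] [Algebra ℂ A] [TopologicalSpace A]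
    {B : Type*} {E : Type*}
    {H : Type*} [NormedAddCommGroup H] [InnerProductSpace ℂ H] [CompleteSpace H]
    {K : Type*} [NormedAddCommGroup K] [InnerProductSpace ℂ K] [CompleteSpace K]
    {innerE : E → E → B} {φ : B → H →L[ℂ] H}
    (Φ : A → E → E) (ind : InducedSpace innerE φ K) (ψ : RepOn A K) : Prop :=
  ∀ a ξ h, ψ.toFun a (ind.ι ξ h) = ind.ι (Φ a ξ) h

/-- The data of the quotient C*-algebra `A_p = A / ker p` of a locally C*-algebra by a
continuous C*-seminorm `p`: a C*-algebra together with a surjective `*`-homomorphism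
whose norm is induced by `p`. -/
structure CStarQuotient (A : Type u) [Ring A] [StarRing A] [Algebra ℂ A] [TopologicalSpace A]
    (p : CStarSeminorm A)
    (Ap : Type v) [NormedRing Ap] [StarRing Ap] [CStarRing Ap] [NormedAlgebra ℂ Ap]
    [StarModule ℂ Ap] [CompleteSpace Ap] where
  π : A →⋆ₐ[ℂ] Ap
  surj : Function.Surjective π
  norm_eq : ∀ a, ‖π a‖ = p a

/-- The data of the quotient Hilbert C*-module `E_p = E / {ξ | p⟨ξ,ξ⟩ = 0}` over
`A_p`, for a Hilbert module `E` over a locally C*-algebra `A`. -/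
structure ModuleQuotient {A : Type u} [Ring A] [StarRing A] [Algebra ℂ A] [UniformSpace A]
    {E : Type v} [AddCommGroup E] [Module ℂ E] [UniformSpace E]
    (M : HilbertModule A E) (p : CStarSeminorm A)
    {Ap : Type w} [NormedRing Ap] [StarRing Ap] [CStarRing Ap] [NormedAlgebra ℂ Ap]
    [StarModule ℂ Ap] [CompleteSpace Ap] (Q : CStarQuotient A p Ap)
    {Ep : Type*} [NormedAddCommGroup Ep] [NormedSpace ℂ Ep]
    (Mp : HilbertCStarModule Ap Ep) where
  σ : E →ₗ[ℂ] Ep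
  surj : Function.Surjective σ
  inner_eq : ∀ ξ η, Mp.inner (σ ξ) (σ η) = Q.π (M.inner ξ η)
  smul_eq : ∀ ξ a, σ (M.smul ξ a) = Mp.smul (σ ξ) (Q.π a)

/-- The data of an isomorphism of the locally C*-algebra `B` onto `K_A(E)`, the
generalized compact operators of a full Hilbert `A`-module `E`; this witnesses
strong Morita equivalence of `A` and `B`. -/
structure MoritaData (A : Type u) [Ring A] [StarRing A] [Algebra ℂ A] [UniformSpace A]
    (B : Type v) [Ring B] [StarRing B] [Algebra ℂ B] [UniformSpace B]
    (E : Type w) [AddCommGroup E] [Module ℂ E] [UniformSpace E]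
    (M : HilbertModule A E) where
  Φ : B → E → E
  map_add : ∀ b c ξ, Φ (b + c) ξ = Φ b ξ + Φ c ξ
  map_mul : ∀ b c ξ, Φ (b * c) ξ = Φ b (Φ c ξ)
  map_smulC : ∀ (z : ℂ) b ξ, Φ (z • b) ξ = z • Φ b ξ
  adjoint : ∀ b, Adjointable M.inner (Φ b) (Φ (star b))
  inj : ∀ b, (∀ ξ, Φ b ξ = 0) → b = 0
  cont : ∀ p : CStarSeminorm A, ∃ q : CStarSeminorm B,
      ∀ b, OpSeminormLE M.inner (fun x => p x) (Φ b) (q b)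
  cont_inv : ∀ q : CStarSeminorm B, ∃ p : CStarSeminorm A,
      ∀ (b : B) (C : ℝ), 0 ≤ C → OpSeminormLE M.inner (fun x => p x) (Φ b) C → q b ≤ C
  theta_mem : ∀ ξ η, ∃ b, ∀ ζ, Φ b ζ = M.smul ξ (M.inner η ζ)
  dense_theta : Dense (↑(Submodule.span ℂ
      {b : B | ∃ ξ η, ∀ ζ, Φ b ζ = M.smul ξ (M.inner η ζ)}) : Set B)
  full : Dense (↑(Submodule.span ℂ {a : A | ∃ ξ η, a = M.inner ξ η}) : Set A)

/-
The elementary tensors `ξ ⊗ h ∈ _EH` and `σ_q ξ ⊗ h ∈ _{E_q}H` have the same Gram matrix,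
because `⟨σ_q ξ, σ_q η⟩ = π_q ⟨ξ, η⟩` and `φ_q ∘ π_q = φ`, and both families are total
(`σ_q` is onto). Hence `ξ ⊗ h ↦ σ_q ξ ⊗ h` extends to a unitary `U`. Since
`(π_q)_*(T) (σ_q ξ) = σ_q (T ξ)`, the two bounded operators `U ∘ _Eφ(T)` and
`_{E_q}φ_q((π_q)_*(T)) ∘ U` agree on elementary tensors, hence everywhere.
-/

theorem Finsupp.denseRange_linearCombination {R M ι : Type*} [Semiring R] [AddCommMonoid M]
    [Module R M] [TopologicalSpace M] {v : ι → M}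
    (hv : Dense (Submodule.span R (Set.range v) : Set M)) :
    DenseRange (linearCombination R v) := by
  rwa [DenseRange, ← LinearMap.coe_range, range_linearCombination]

section GramMatrix

variable {𝕜 ι K₁ K₂ : Type*} [RCLike 𝕜]
  [NormedAddCommGroup K₁] [InnerProductSpace 𝕜 K₁] [NormedAddCommGroup K₂] [InnerProductSpace 𝕜 K₂]
  {f : ι → K₁} {g : ι → K₂}

open Finsupp

theorem inner_linearCombination_eq_of_inner_eq (hfg : ∀ i j, ⟪f i, f j⟫_𝕜 = ⟪g i, g j⟫_𝕜)
    (x y : ι →₀ 𝕜) :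
    ⟪linearCombination 𝕜 f x, linearCombination 𝕜 f y⟫_𝕜 =
      ⟪linearCombination 𝕜 g x, linearCombination 𝕜 g y⟫_𝕜 := by
  simp [linearCombination_apply, Finsupp.sum, sum_inner, inner_sum, inner_smul_left,
    inner_smul_right, hfg]

theorem norm_linearCombination_eq_of_inner_eq (hfg : ∀ i j, ⟪f i, f j⟫_𝕜 = ⟪g i, g j⟫_𝕜)
    (x : ι →₀ 𝕜) : ‖linearCombination 𝕜 g x‖ = ‖linearCombination 𝕜 f x‖ := by
  rw [@norm_eq_sqrt_re_inner 𝕜, @norm_eq_sqrt_re_inner 𝕜,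
    inner_linearCombination_eq_of_inner_eq hfg]

theorem exists_linearIsometryEquiv_of_inner_eq [CompleteSpace K₁] [CompleteSpace K₂]
    (hfg : ∀ i j, ⟪f i, f j⟫_𝕜 = ⟪g i, g j⟫_𝕜)
    (hf : Dense (Submodule.span 𝕜 (Set.range f) : Set K₁))
    (hg : Dense (Submodule.span 𝕜 (Set.range g) : Set K₂)) :
    ∃ U : K₁ ≃ₗᵢ[𝕜] K₂, ∀ i, U (f i) = g i := by
  have hf' := Finsupp.denseRange_linearCombination hf
  have hg' := Finsupp.denseRange_linearCombination hg
  refine ⟨(LinearEquiv.refl 𝕜 (ι →₀ 𝕜)).extendOfIsometry _ _ hf' hg'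
    (norm_linearCombination_eq_of_inner_eq hfg), fun i => ?_⟩
  simpa using (LinearEquiv.refl 𝕜 (ι →₀ 𝕜)).extendOfIsometry_eq _ _ hf' hg'
    (norm_linearCombination_eq_of_inner_eq hfg) (Finsupp.single i 1)

end GramMatrix

theorem InducedSpace.dense_span_range {B E H K : Type*}
    [NormedAddCommGroup H] [InnerProductSpace ℂ H] [CompleteSpace H]
    [NormedAddCommGroup K] [InnerProductSpace ℂ K] [CompleteSpace K]
    {innerE : E → E → B} {φ : B → H →L[ℂ] H} (ind : InducedSpace innerE φ K) :
    Dense (Submodule.span ℂ (Set.range (Function.uncurry ind.ι)) : Set K) := by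
  convert ind.dense using 4
  ext k
  simp [eq_comm]

theorem statement8_general (B : Type u) [Ring B] [StarRing B] [Algebra ℂ B] [UniformSpace B]
    (E : Type u) [AddCommGroup E] [Module ℂ E] [UniformSpace E]
    (M : HilbertModule B E)
    (H : Type u) [NormedAddCommGroup H] [InnerProductSpace ℂ H] [CompleteSpace H]
    (φ : RepOn B H)
    (q : CStarSeminorm B)
    (Bq : Type u) [NormedRing Bq] [StarRing Bq] [CStarRing Bq] [NormedAlgebra ℂ Bq] [StarModule ℂ Bq] [CompleteSpace Bq] (Q : CStarQuotient B q Bq)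
    (φq : RepOn Bq H) (hfac : ∀ b, φq.toFun (Q.π b) = φ.toFun b)
    (Eq' : Type u) [NormedAddCommGroup Eq'] [NormedSpace ℂ Eq']
    (Mq : HilbertCStarModule Bq Eq') (R : ModuleQuotient M q Q Mq)
    (K₁ : Type u) [NormedAddCommGroup K₁] [InnerProductSpace ℂ K₁] [CompleteSpace K₁]
    (K₂ : Type u) [NormedAddCommGroup K₂] [InnerProductSpace ℂ K₂] [CompleteSpace K₂]
    (indE : InducedSpace M.inner φ.toFun K₁)
    (indq : InducedSpace Mq.inner φq.toFun K₂) :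
    ∃ U : K₁ ≃ₗᵢ[ℂ] K₂,
      (∀ ξ h, U (indE.ι ξ h) = indq.ι (R.σ ξ) h) ∧
      ∀ T S : E → E, Adjointable M.inner T S →
        ∀ Tq : Eq' → Eq', (∀ ξ, Tq (R.σ ξ) = R.σ (T ξ)) →
        ∀ (TopE : K₁ →L[ℂ] K₁) (Topq : K₂ →L[ℂ] K₂),
          (∀ ξ h, TopE (indE.ι ξ h) = indE.ι (T ξ) h) →
          (∀ ζ h, Topq (indq.ι ζ h) = indq.ι (Tq ζ) h) →
          ∀ k, U (TopE k) = Topq (U k) := by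
  have hdense : Dense (Submodule.span ℂ
      (Set.range (Function.uncurry indq.ι ∘ Prod.map R.σ id)) : Set K₂) := by
    rw [(R.surj.prodMap Function.surjective_id).range_comp]
    exact indq.dense_span_range
  obtain ⟨U, hU⟩ := exists_linearIsometryEquiv_of_inner_eq
    (fun ⟨ξ, h⟩ ⟨η, h'⟩ => by
      simp only [Function.comp_apply, Prod.map_apply, id, Function.uncurry_apply_pair]
      rw [indE.inner_eq, indq.inner_eq, R.inner_eq, hfac])
    indE.dense_span_range hdense
  have hUι : ∀ ξ h, U (indE.ι ξ h) = indq.ι (R.σ ξ) h := fun ξ h => hU (ξ, h)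
  refine ⟨U, hUι, fun T _ _ Tq hTq TopE Topq hTopE hTopq k => ?_⟩
  set V : K₁ →L[ℂ] K₂ := (U.toContinuousLinearEquiv : K₁ →L[ℂ] K₂)
  have hintertwine : V.comp TopE = Topq.comp V := by
    refine ContinuousLinearMap.ext_on indE.dense ?_
    rintro _ ⟨ξ, h, rfl⟩
    simp [V, hTopE, hTopq, hUι, hTq]
  exact congr($hintertwine k)

/-- For a Hilbert module `E` over a locally C*-algebra `B`, a
non-degenerate representation `φ = φ_q ∘ π_q` of `B`, the map `ξ ⊗ h ↦ σ_q(ξ) ⊗ h`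
extends to a unitary `U : _EH → _{E_q}H` intertwining `_Eφ(T)` with
`_{E_q}φ_q((π_q)_*(T))` for every adjointable `T`. -/
theorem statement8 (B : Type u) [Ring B] [StarRing B] [Algebra ℂ B] [UniformSpace B] [IsUniformAddGroup B]
    [IsTopologicalRing B] [ContinuousStar B] [ContinuousSMul ℂ B] [CompleteSpace B] [T2Space B] (hB : IsLocallyCStarAlgebra B)
    (E : Type u) [AddCommGroup E] [Module ℂ E] [UniformSpace E] [IsUniformAddGroup E]
    [ContinuousSMul ℂ E]
    (M : HilbertModule B E)
    (H : Type u) [NormedAddCommGroup H] [InnerProductSpace ℂ H] [CompleteSpace H]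
    (φ : RepOn B H) (hφ : φ.Nondegenerate)
    (q : CStarSeminorm B)
    (Bq : Type u) [NormedRing Bq] [StarRing Bq] [CStarRing Bq] [NormedAlgebra ℂ Bq] [StarModule ℂ Bq] [CompleteSpace Bq] (Q : CStarQuotient B q Bq)
    (φq : RepOn Bq H) (hfac : ∀ b, φq.toFun (Q.π b) = φ.toFun b)
    (Eq' : Type u) [NormedAddCommGroup Eq'] [NormedSpace ℂ Eq']
    (Mq : HilbertCStarModule Bq Eq') (R : ModuleQuotient M q Q Mq)
    (K₁ : Type u) [NormedAddCommGroup K₁] [InnerProductSpace ℂ K₁] [CompleteSpace K₁]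
    (K₂ : Type u) [NormedAddCommGroup K₂] [InnerProductSpace ℂ K₂] [CompleteSpace K₂]
    (indE : InducedSpace M.inner φ.toFun K₁)
    (indq : InducedSpace Mq.inner φq.toFun K₂) :
    ∃ U : K₁ ≃ₗᵢ[ℂ] K₂,
      (∀ ξ h, U (indE.ι ξ h) = indq.ι (R.σ ξ) h) ∧
      ∀ T S : E → E, Adjointable M.inner T S →
        ∀ Tq : Eq' → Eq', (∀ ξ, Tq (R.σ ξ) = R.σ (T ξ)) →
        ∀ (TopE : K₁ →L[ℂ] K₁) (Topq : K₂ →L[ℂ] K₂),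
          (∀ ξ h, TopE (indE.ι ξ h) = indE.ι (T ξ) h) →
          (∀ ζ h, Topq (indq.ι ζ h) = indq.ι (Tq ζ) h) →
          ∀ k, U (TopE k) = Topq (U k) :=
  statement8_general B E M H φ q Bq Q φq hfac Eq' Mq R K₁ K₂ indE indq
end
end

section
/- Let A, B, C be C*-algebras, E a Hilbert B-module, F a Hilbert C-module, Φ₁ : A → L_B(E) and Φ₂ : B → L_C(F) non-degenerate *-homomorphisms, and (φ, H) a non-degenerate representation of C. Then the map (ξ ⊗ η) ⊗ h ↦ ξ ⊗ (η ⊗ h) extends to a unitary from _(E⊗_{Φ₂}F)H onto _E(_FH) intertwining the representations _{E⊗_{Φ₂}F}^Aφ and _E^A(_F^Bφ) of A. -/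
noncomputable section

open Filter Topology Set
open scoped InnerProductSpace

universe u v w

/-!
Both `_{E⊗F}H` and `_E(_FH)` are densely spanned by elementary vectors indexed by
`(ξ, η, h) ∈ E × F × H`, namely `(ξ ⊗ η) ⊗ h` and `ξ ⊗ (η ⊗ h)`, and the two families have
the same Gram matrix: both inner products unfold to `⟪h₁, φ(⟨η₁, Φ₂(⟨ξ₁, ξ₂⟩) η₂⟩) h₂⟫`.
Two densely spanning families with equal Gram matrices are matched by a unitary, and this
unitary intertwines the actions of `A` because it does so on the spanning vectors.
Density of the elementary tensors in the induced spaces comes from the density of elementary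
tensors in `E ⊗ F` and in `_FH`, transported by the maps `x ↦ x ⊗ h` and `k ↦ ξ ⊗ k`; these
are bounded linear maps, as their Gram kernels are linear and bounded (for the first one
because `φ` is continuous).
-/

section Gram

variable {I : Type*}
  {K₁ : Type*} [NormedAddCommGroup K₁] [InnerProductSpace ℂ K₁]
  {K₂ : Type*} [NormedAddCommGroup K₂] [InnerProductSpace ℂ K₂]

theorem norm_linearCombination_eq_of_inner_eq_s12 {v : I → K₁} {w : I → K₂}
    (hvw : ∀ i j, ⟪v i, v j⟫_ℂ = ⟪w i, w j⟫_ℂ) (c : I →₀ ℂ) :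
    ‖Finsupp.linearCombination ℂ w c‖ = ‖Finsupp.linearCombination ℂ v c‖ := by
  have hinner : ⟪Finsupp.linearCombination ℂ w c, Finsupp.linearCombination ℂ w c⟫_ℂ =
      ⟪Finsupp.linearCombination ℂ v c, Finsupp.linearCombination ℂ v c⟫_ℂ := by
    simp only [Finsupp.linearCombination_apply, Finsupp.sum, sum_inner, inner_sum,
      inner_smul_left, inner_smul_right, hvw]
  rw [@norm_eq_sqrt_re_inner ℂ, @norm_eq_sqrt_re_inner ℂ, hinner]

variable [CompleteSpace K₂]

theorem exists_linearIsometry_of_inner_eq {v : I → K₁} {w : I → K₂}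
    (hvw : ∀ i j, ⟪v i, v j⟫_ℂ = ⟪w i, w j⟫_ℂ)
    (hv : Dense (Submodule.span ℂ (range v) : Set K₁)) :
    ∃ T : K₁ →ₗᵢ[ℂ] K₂, ∀ i, T (v i) = w i := by
  set L := Finsupp.linearCombination ℂ v
  set L' := Finsupp.linearCombination ℂ w
  have hL : DenseRange L := by
    rwa [DenseRange, ← LinearMap.coe_range, Finsupp.range_linearCombination]
  have hbound : ∃ C, ∀ c, ‖L' c‖ ≤ C * ‖L c‖ :=
    ⟨1, fun c => by rw [one_mul, norm_linearCombination_eq_of_inner_eq_s12 hvw]⟩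
  set T := L'.extendOfNorm L
  have hT : ∀ c, T (L c) = L' c := LinearMap.extendOfNorm_eq hL hbound
  have hT_norm : ∀ x, ‖T x‖ = ‖x‖ := by
    refine hL.induction ?_ (isClosed_eq (by fun_prop) continuous_norm)
    rintro _ ⟨c, rfl⟩
    rw [hT, norm_linearCombination_eq_of_inner_eq_s12 hvw]
  refine ⟨⟨T.toLinearMap, hT_norm⟩, fun i => ?_⟩
  simpa [L, L'] using hT (Finsupp.single i 1)

variable [CompleteSpace K₁]

theorem exists_linearIsometryEquiv_of_inner_eq_s12 {v : I → K₁} {w : I → K₂}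
    (hvw : ∀ i j, ⟪v i, v j⟫_ℂ = ⟪w i, w j⟫_ℂ)
    (hv : Dense (Submodule.span ℂ (range v) : Set K₁))
    (hw : Dense (Submodule.span ℂ (range w) : Set K₂)) :
    ∃ U : K₁ ≃ₗᵢ[ℂ] K₂, ∀ i, U (v i) = w i := by
  obtain ⟨T, hT⟩ := exists_linearIsometry_of_inner_eq hvw hv
  obtain ⟨S, hS⟩ := exists_linearIsometry_of_inner_eq (fun i j => (hvw i j).symm) hw
  have hTS : T.toContinuousLinearMap.comp S.toContinuousLinearMap = .id ℂ K₂ :=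
    ContinuousLinearMap.ext_on hw (by rintro _ ⟨i, rfl⟩; simp [hS, hT])
  have hT_surj : Function.Surjective T := fun y => ⟨S y, DFunLike.congr_fun hTS y⟩
  exact ⟨.ofSurjective T hT_surj, hT⟩

end Gram

theorem isLinearMap_of_inner_eq {V : Type*} [AddCommGroup V] [Module ℂ V]
    {K : Type*} [NormedAddCommGroup K] [InnerProductSpace ℂ K] {f : V → K} (ℓ : V → V →ₗ[ℂ] ℂ)
    (hf : ∀ x y, ⟪f x, f y⟫_ℂ = ℓ x y) : IsLinearMap ℂ f := by
  have key : ∀ (c : ℂ) x y, f (c • x + y) = c • f x + f y := by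
    intro c x y
    set d := f (c • x + y) - (c • f x + f y)
    -- `d` is orthogonal to the range of `f`, hence to itself.
    have hd : ∀ z, ⟪f z, d⟫_ℂ = 0 := fun z => by
      simp only [d, inner_sub_right, inner_add_right, inner_smul_right, hf, map_add, map_smul,
        smul_eq_mul, sub_self]
    have : ⟪d, d⟫_ℂ = 0 := by
      rw [← inner_conj_symm]
      simp only [d, inner_sub_left, inner_add_left, inner_smul_left, hd, mul_zero, add_zero,
        sub_zero, map_zero]
    exact sub_eq_zero.mp (inner_self_eq_zero.mp this)
  have hzero : f 0 = 0 := by simpa using key 1 0 0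
  exact ⟨fun x y => by simpa using key 1 x y, fun c x => by simpa [hzero] using key c x 0⟩

theorem exists_continuousLinearMap_of_inner_eq {V : Type*} [NormedAddCommGroup V]
    [NormedSpace ℂ V] {K : Type*} [NormedAddCommGroup K] [InnerProductSpace ℂ K]
    {f : V → K} (ℓ : V → V →ₗ[ℂ] ℂ) (hf : ∀ x y, ⟪f x, f y⟫_ℂ = ℓ x y) (C : ℝ)
    (hC : ∀ x, ‖f x‖ ^ 2 ≤ C * ‖x‖ ^ 2) : ∃ L : V →L[ℂ] K, ⇑L = f := by
  refine ⟨((isLinearMap_of_inner_eq ℓ hf).mk' f).mkContinuous (√C) fun x => ?_, rfl⟩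
  calc ‖f x‖ = √(‖f x‖ ^ 2) := (Real.sqrt_sq (norm_nonneg _)).symm
    _ ≤ √(C * ‖x‖ ^ 2) := Real.sqrt_le_sqrt (hC x)
    _ = √C * ‖x‖ := by rw [Real.sqrt_mul' _ (sq_nonneg _), Real.sqrt_sq (norm_nonneg _)]

theorem ContinuousLinearMap.re_inner_apply_le {H : Type*} [NormedAddCommGroup H]
    [InnerProductSpace ℂ H] (T : H →L[ℂ] H) (h : H) : RCLike.re ⟪h, T h⟫_ℂ ≤ ‖T‖ * ‖h‖ ^ 2 :=
  calc RCLike.re ⟪h, T h⟫_ℂ ≤ ‖h‖ * ‖T h‖ := re_inner_le_norm _ _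
    _ ≤ ‖h‖ * (‖T‖ * ‖h‖) := by gcongr; exact T.le_opNorm h
    _ = ‖T‖ * ‖h‖ ^ 2 := by ring

section DenseSpan

variable {R : Type*} [Semiring R]
  {X : Type*} [AddCommMonoid X] [Module R X] [TopologicalSpace X]
  {Y : Type*} [AddCommMonoid Y] [Module R Y] [TopologicalSpace Y]

theorem ContinuousLinearMap.mem_closure_span_of_dense_span (L : X →L[R] Y) {S : Set X}
    (hS : Dense (Submodule.span R S : Set X)) {T : Set Y} (hST : MapsTo L S T) (x : X) :
    L x ∈ closure (Submodule.span R T : Set Y) := by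
  refine hS.induction (fun x hx => subset_closure ?_) (isClosed_closure.preimage L.continuous) x
  have hx' : L x ∈ (Submodule.span R S).map (L : X →ₗ[R] Y) := ⟨x, hx, rfl⟩
  rw [Submodule.map_span] at hx'
  exact Submodule.span_mono (image_subset_iff.2 hST) hx'

theorem dense_span_of_subset_closure_span [ContinuousAdd Y] [ContinuousConstSMul R Y]
    {D T : Set Y} (hD : Dense (Submodule.span R D : Set Y))
    (hDT : D ⊆ closure (Submodule.span R T : Set Y)) : Dense (Submodule.span R T : Set Y) := by
  rw [← Submodule.topologicalClosure_coe] at hDT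
  exact dense_closure.mp (hD.mono (Submodule.span_le.2 hDT))

end DenseSpan

def HilbertCStarModule.innerₗ {B : Type*} [NormedRing B] [StarRing B] [CStarRing B]
    [NormedAlgebra ℂ B] [StarModule ℂ B] [CompleteSpace B]
    {E : Type*} [NormedAddCommGroup E] [NormedSpace ℂ E] (M : HilbertCStarModule B E) (ξ : E) :
    E →ₗ[ℂ] B where
  toFun := M.inner ξ
  map_add' := M.inner_add_right ξ
  map_smul' c := M.inner_smulC c ξ

def RepOn.toContinuousLinearMap {A : Type*} [Ring A] [StarRing A] [Algebra ℂ A]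
    [TopologicalSpace A]
    {H : Type*} [NormedAddCommGroup H] [InnerProductSpace ℂ H] [CompleteSpace H]
    (φ : RepOn A H) : A →L[ℂ] H →L[ℂ] H where
  toFun := φ.toFun
  map_add' := φ.map_add
  map_smul' := φ.map_smulC
  cont := φ.continuous

namespace InducedSpace

variable {B : Type*} {E : Type*}
  {H : Type*} [NormedAddCommGroup H] [InnerProductSpace ℂ H] [CompleteSpace H]
  {K : Type*} [NormedAddCommGroup K] [InnerProductSpace ℂ K] [CompleteSpace K]
  {innerE : E → E → B} {φ : B → H →L[ℂ] H}

theorem norm_ι_sq (ind : InducedSpace innerE φ K) (ξ : E) (h : H) :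
    ‖ind.ι ξ h‖ ^ 2 = RCLike.re ⟪h, φ (innerE ξ ξ) h⟫_ℂ := by
  rw [← ind.inner_eq, inner_self_eq_norm_sq]

theorem exists_continuousLinearMap_right (ind : InducedSpace innerE φ K) (ξ : E) :
    ∃ L : H →L[ℂ] K, ⇑L = ind.ι ξ :=
  exists_continuousLinearMap_of_inner_eq
    (fun a => (innerₛₗ ℂ a).comp (φ (innerE ξ ξ)).toLinearMap) (ind.inner_eq ξ ξ)
    ‖φ (innerE ξ ξ)‖ fun h => (ind.norm_ι_sq ξ h).trans_le ((φ _).re_inner_apply_le h)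

theorem exists_continuousLinearMap_left {C : Type*} [NormedRing C] [StarRing C] [CStarRing C]
    [NormedAlgebra ℂ C] [StarModule ℂ C] [CompleteSpace C]
    {G : Type*} [NormedAddCommGroup G] [NormedSpace ℂ G]
    {P : HilbertCStarModule C G} {φ : RepOn C H} (ind : InducedSpace P.inner φ.toFun K) (h : H) :
    ∃ L : G →L[ℂ] K, ⇑L = fun x => ind.ι x h := by
  refine exists_continuousLinearMap_of_inner_eq
    (fun x => (innerₛₗ ℂ h).comp ((ContinuousLinearMap.apply ℂ H h).toLinearMap.comp
      (φ.toContinuousLinearMap.toLinearMap.comp (P.innerₗ x)))) (fun x y => ind.inner_eq x y h h)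
    (‖φ.toContinuousLinearMap‖ * ‖h‖ ^ 2) fun x => ?_
  calc ‖ind.ι x h‖ ^ 2 ≤ ‖φ.toContinuousLinearMap (P.inner x x)‖ * ‖h‖ ^ 2 :=
        (ind.norm_ι_sq x h).trans_le ((φ.toContinuousLinearMap _).re_inner_apply_le h)
    _ ≤ ‖φ.toContinuousLinearMap‖ * ‖P.inner x x‖ * ‖h‖ ^ 2 := by
        gcongr; exact φ.toContinuousLinearMap.le_opNorm _
    _ = ‖φ.toContinuousLinearMap‖ * ‖h‖ ^ 2 * ‖x‖ ^ 2 := by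
        rw [P.norm_eq x, Real.sq_sqrt (norm_nonneg _)]; ring

theorem dense_span_of_dense_left [TopologicalSpace E] [AddCommGroup E] [Module ℂ E]
    (ind : InducedSpace innerE φ K) (hι : ∀ h, ∃ L : E →L[ℂ] K, ⇑L = fun x => ind.ι x h)
    {S : Set E} (hS : Dense (Submodule.span ℂ S : Set E)) {T : Set K}
    (hST : ∀ x ∈ S, ∀ h, ind.ι x h ∈ T) : Dense (Submodule.span ℂ T : Set K) := by
  refine dense_span_of_subset_closure_span ind.dense ?_
  rintro _ ⟨x, h, rfl⟩
  obtain ⟨L, hL⟩ := hι h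
  simpa only [hL] using
    L.mem_closure_span_of_dense_span hS (fun x hx => by simpa only [hL] using hST x hx h) x

theorem dense_span_of_dense_right (ind : InducedSpace innerE φ K) {S : Set H}
    (hS : Dense (Submodule.span ℂ S : Set H)) {T : Set K} (hST : ∀ ξ, ∀ h ∈ S, ind.ι ξ h ∈ T) :
    Dense (Submodule.span ℂ T : Set K) := by
  refine dense_span_of_subset_closure_span ind.dense ?_
  rintro _ ⟨ξ, h, rfl⟩
  obtain ⟨L, hL⟩ := ind.exists_continuousLinearMap_right ξ
  simpa only [hL] using
    L.mem_closure_span_of_dense_span hS (fun h hh => by simpa only [hL] using hST ξ h hh) h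

end InducedSpace

theorem statement12_general (A : Type u) [NormedRing A] [StarRing A] [NormedAlgebra ℂ A]
    (B : Type u) [NormedRing B] [StarRing B] [CStarRing B] [NormedAlgebra ℂ B] [StarModule ℂ B] [CompleteSpace B]
    (C : Type u) [NormedRing C] [StarRing C] [CStarRing C] [NormedAlgebra ℂ C] [StarModule ℂ C] [CompleteSpace C]
    (E : Type u) [NormedAddCommGroup E] [NormedSpace ℂ E]
    (F : Type u) [NormedAddCommGroup F] [NormedSpace ℂ F]
    (M : HilbertCStarModule B E) (N : HilbertCStarModule C F)
    -- Φ₁ : A → L_B(E), a non-degenerate *-homomorphism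
    (Φ₁ : A → E → E)
    -- Φ₂ : B → L_C(F), a non-degenerate *-homomorphism
    (Φ₂ : B → F → F)
    -- the inner tensor product G = E ⊗_{Φ₂} F
    (G : Type u) [NormedAddCommGroup G] [NormedSpace ℂ G]
    (P : HilbertCStarModule C G) (τ : E → F → G)
    (hτ_inner : ∀ ξ₁ η₁ ξ₂ η₂,
      P.inner (τ ξ₁ η₁) (τ ξ₂ η₂) = N.inner η₁ (Φ₂ (M.inner ξ₁ ξ₂) η₂))
    (hτ_dense : Dense (↑(Submodule.span ℂ {x : G | ∃ ξ η, x = τ ξ η}) : Set G))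
    -- a non-degenerate representation of C
    (H : Type u) [NormedAddCommGroup H] [InnerProductSpace ℂ H] [CompleteSpace H]
    (φ : RepOn C H)
    -- induction via G, with A acting via (Φ₂)_* ∘ Φ₁
    (KG : Type u) [NormedAddCommGroup KG] [InnerProductSpace ℂ KG] [CompleteSpace KG]
    (indG : InducedSpace P.inner φ.toFun KG)
    (ψG : RepOn A KG) (hψG : ∀ a ξ η h, ψG.toFun a (indG.ι (τ ξ η) h) = indG.ι (τ (Φ₁ a ξ) η) h)
    -- induction via F, giving a representation of B
    (KF : Type u) [NormedAddCommGroup KF] [InnerProductSpace ℂ KF] [CompleteSpace KF]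
    (indF : InducedSpace N.inner φ.toFun KF)
    (ψF : RepOn B KF) (hψF : ∀ b η h, ψF.toFun b (indF.ι η h) = indF.ι (Φ₂ b η) h)
    -- then induction via E from (ψF, KF)
    (K2 : Type u) [NormedAddCommGroup K2] [InnerProductSpace ℂ K2] [CompleteSpace K2]
    (ind2 : InducedSpace M.inner ψF.toFun K2)
    (ψ2 : RepOn A K2) (hψ2 : ∀ a ξ k, ψ2.toFun a (ind2.ι ξ k) = ind2.ι (Φ₁ a ξ) k) :
    ∃ U : KG ≃ₗᵢ[ℂ] K2,
      (∀ ξ η h, U (indG.ι (τ ξ η) h) = ind2.ι ξ (indF.ι η h)) ∧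
      ∀ a k, U (ψG.toFun a k) = ψ2.toFun a (U k) := by
  let v : E × F × H → KG := fun p => indG.ι (τ p.1 p.2.1) p.2.2
  let w : E × F × H → K2 := fun p => ind2.ι p.1 (indF.ι p.2.1 p.2.2)
  have hvw : ∀ p q, ⟪v p, v q⟫_ℂ = ⟪w p, w q⟫_ℂ := by
    rintro ⟨ξ₁, η₁, h₁⟩ ⟨ξ₂, η₂, h₂⟩
    simp only [v, w, indG.inner_eq, hτ_inner, ind2.inner_eq, hψF, indF.inner_eq]
  have hv : Dense (Submodule.span ℂ (range v) : Set KG) :=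
    indG.dense_span_of_dense_left indG.exists_continuousLinearMap_left hτ_dense
      (by rintro _ ⟨ξ, η, rfl⟩ h; exact ⟨(ξ, η, h), rfl⟩)
  have hw : Dense (Submodule.span ℂ (range w) : Set K2) :=
    ind2.dense_span_of_dense_right indF.dense (by rintro ξ _ ⟨η, h, rfl⟩; exact ⟨(ξ, η, h), rfl⟩)
  obtain ⟨U, hU⟩ := exists_linearIsometryEquiv_of_inner_eq_s12 hvw hv hw
  have hU' : ∀ ξ η h, U (indG.ι (τ ξ η) h) = ind2.ι ξ (indF.ι η h) := fun ξ η h => hU (ξ, η, h)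
  refine ⟨U, hU', fun a => ?_⟩
  have hcomm : (U : KG →L[ℂ] K2).comp (ψG.toFun a) = (ψ2.toFun a).comp (U : KG →L[ℂ] K2) :=
    ContinuousLinearMap.ext_on hv (by
      rintro _ ⟨⟨ξ, η, h⟩, rfl⟩
      simp [v, hψG, hU', hψ2])
  exact DFunLike.congr_fun hcomm

/-- **Induction in stages for C*-algebras, Rieffel.** With non-degenerate
`*`-homomorphisms `Φ₁ : A → L_B(E)`, `Φ₂ : B → L_C(F)` and a non-degenerate
representation `(φ, H)` of `C`, the map `(ξ ⊗ η) ⊗ h ↦ ξ ⊗ (η ⊗ h)` extends to a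
unitary from `_{E⊗F}H` onto `_E(_FH)` intertwining the induced representations of `A`. -/
theorem statement12 (A : Type u) [NormedRing A] [StarRing A] [CStarRing A] [NormedAlgebra ℂ A] [StarModule ℂ A] [CompleteSpace A]
    (B : Type u) [NormedRing B] [StarRing B] [CStarRing B] [NormedAlgebra ℂ B] [StarModule ℂ B] [CompleteSpace B]
    (C : Type u) [NormedRing C] [StarRing C] [CStarRing C] [NormedAlgebra ℂ C] [StarModule ℂ C] [CompleteSpace C]
    (E : Type u) [NormedAddCommGroup E] [NormedSpace ℂ E]
    (F : Type u) [NormedAddCommGroup F] [NormedSpace ℂ F]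
    (M : HilbertCStarModule B E) (N : HilbertCStarModule C F)
    -- Φ₁ : A → L_B(E), a non-degenerate *-homomorphism
    (Φ₁ : A → E → E)
    (h1add : ∀ a b ξ, Φ₁ (a + b) ξ = Φ₁ a ξ + Φ₁ b ξ)
    (h1mul : ∀ a b ξ, Φ₁ (a * b) ξ = Φ₁ a (Φ₁ b ξ))
    (h1smul : ∀ (c : ℂ) a ξ, Φ₁ (c • a) ξ = c • Φ₁ a ξ)
    (h1adj : ∀ a, Adjointable M.inner (Φ₁ a) (Φ₁ (star a)))
    (h1nd : Dense (↑(Submodule.span ℂ {ξ : E | ∃ a η, ξ = Φ₁ a η}) : Set E))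
    -- Φ₂ : B → L_C(F), a non-degenerate *-homomorphism
    (Φ₂ : B → F → F)
    (h2add : ∀ b b' η, Φ₂ (b + b') η = Φ₂ b η + Φ₂ b' η)
    (h2mul : ∀ b b' η, Φ₂ (b * b') η = Φ₂ b (Φ₂ b' η))
    (h2smul : ∀ (c : ℂ) b η, Φ₂ (c • b) η = c • Φ₂ b η)
    (h2adj : ∀ b, Adjointable N.inner (Φ₂ b) (Φ₂ (star b)))
    (h2nd : Dense (↑(Submodule.span ℂ {η : F | ∃ b ζ, η = Φ₂ b ζ}) : Set F))
    -- the inner tensor product G = E ⊗_{Φ₂} F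
    (G : Type u) [NormedAddCommGroup G] [NormedSpace ℂ G]
    (P : HilbertCStarModule C G) (τ : E → F → G)
    (hτ_inner : ∀ ξ₁ η₁ ξ₂ η₂,
      P.inner (τ ξ₁ η₁) (τ ξ₂ η₂) = N.inner η₁ (Φ₂ (M.inner ξ₁ ξ₂) η₂))
    (hτ_dense : Dense (↑(Submodule.span ℂ {x : G | ∃ ξ η, x = τ ξ η}) : Set G))
    -- a non-degenerate representation of C
    (H : Type u) [NormedAddCommGroup H] [InnerProductSpace ℂ H] [CompleteSpace H]
    (φ : RepOn C H) (hφ : φ.Nondegenerate)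
    -- induction via G, with A acting via (Φ₂)_* ∘ Φ₁
    (KG : Type u) [NormedAddCommGroup KG] [InnerProductSpace ℂ KG] [CompleteSpace KG]
    (indG : InducedSpace P.inner φ.toFun KG)
    (ψG : RepOn A KG) (hψG : ∀ a ξ η h, ψG.toFun a (indG.ι (τ ξ η) h) = indG.ι (τ (Φ₁ a ξ) η) h)
    -- induction via F, giving a representation of B
    (KF : Type u) [NormedAddCommGroup KF] [InnerProductSpace ℂ KF] [CompleteSpace KF]
    (indF : InducedSpace N.inner φ.toFun KF)
    (ψF : RepOn B KF) (hψF : ∀ b η h, ψF.toFun b (indF.ι η h) = indF.ι (Φ₂ b η) h)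
    -- then induction via E from (ψF, KF)
    (K2 : Type u) [NormedAddCommGroup K2] [InnerProductSpace ℂ K2] [CompleteSpace K2]
    (ind2 : InducedSpace M.inner ψF.toFun K2)
    (ψ2 : RepOn A K2) (hψ2 : ∀ a ξ k, ψ2.toFun a (ind2.ι ξ k) = ind2.ι (Φ₁ a ξ) k) :
    ∃ U : KG ≃ₗᵢ[ℂ] K2,
      (∀ ξ η h, U (indG.ι (τ ξ η) h) = ind2.ι ξ (indF.ι η h)) ∧
      ∀ a k, U (ψG.toFun a k) = ψ2.toFun a (U k) :=
  statement12_general A B C E F M N Φ₁ Φ₂ G P τ hτ_inner hτ_dense H φ KG indG ψG hψG KF indF ψF hψF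
    K2 ind2 ψ2 hψ2
end
end
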